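/- For every δ ∈ (0, 0.1) and every sufficiently large integer c (how large depending only on δ), there exists N₀ (depending on δ and c) such that the following holds for all n ≥ N₀. Let B, M, t be positive integers with K = 2^t, K ≤ n, n^δ/2 ≤ B ≤ 2·n^δ, and M ≤ K·B/2. Fix a function v : Fin M → Option (Fin K), and let (r_i)_{i ∈ Fin M} be a c-wise independent family of random variables, each uniformly distributed on Fin K. For k ∈ Fin K let X_k = #{ i : v_i = some w and w ⊕ r_i = k }. Then Pr[ ∃ k ∈ Fin K with X_k > 3B/4 ] ≤ n^{1 − δc/3}. -/

import Mathlib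

/-!
Let `T = {i | v_i = some w_i}`, `b_k i = w_i ⊕ k` and `Z_k = ∑_{i ∈ T} (1[r_i = b_k i] - 1/K)`.
Since `w ↦ w ⊕ a` is an involution, `X_k = Z_k + |T|/K` with `|T|/K ≤ M/K ≤ B/2`, so
`X_k > 3B/4` forces `Z_k ≥ B/4`. Take `q = 2h` with `h = ⌊c/3⌋ + 2`, so `q ≤ c`. Expanding
`Z_k^q`, each monomial involves at most `q` of the shifts, on which `c`-wise independence is full
independence; a monomial in which some summand occurs exactly once has mean zero, and the others
contribute at most `K^{-s}` where `s ≤ q/2` is the number of distinct summands. Hence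
`E[Z_k^q] ≤ ∑_{s ≤ h} C(|T|, s) s^q K^{-s} ≤ (h + 1) h^q (B/2)^h`, and Markov's inequality gives
`Pr[Z_k ≥ B/4] ≤ (h + 1) h^q (8/B)^h`. As `B ≥ n^δ/2`, a union bound over the `K ≤ n` values of `k`
gives at most `n^{1 + δ - δh} ≤ n^{1 - δc/3}` once `n^δ ≥ (h + 1) h^{2h} 16^h`.
-/

open MeasureTheory ProbabilityTheory

/-- Bitwise exclusive-or on `Fin (2^t)`, identifying elements with `t`-bit strings. -/
def finXor {t : ℕ} (a b : Fin (2 ^ t)) : Fin (2 ^ t) :=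
  ⟨a.val ^^^ b.val, Nat.xor_lt_two_pow a.isLt b.isLt⟩

/-- A family `(X_i)_{i ∈ ι}` of random variables is `c`-wise independent if for every
subset `S ⊆ ι` with `|S| ≤ c`, the subfamily `(X_i)_{i ∈ S}` is mutually independent. -/
def CWiseIndep {Ω : Type*} {ι : Type*} {β : Type*} [MeasurableSpace Ω] [MeasurableSpace β]
    (c : ℕ) (X : ι → Ω → β) (μ : Measure Ω) : Prop :=
  ∀ S : Finset ι, S.card ≤ c →
    iIndepFun (fun i : S => X i.val) μ

open Finset

section Independence

variable {Ω ι : Type*} [MeasurableSpace Ω] {μ : Measure Ω} {c : ℕ}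

lemma CWiseIndep.comp {β γ : Type*} [MeasurableSpace β] [MeasurableSpace γ] {X : ι → Ω → β}
    (hX : CWiseIndep c X μ) (f : ι → β → γ) (hf : ∀ i, Measurable (f i)) :
    CWiseIndep c (fun i ω ↦ f i (X i ω)) μ :=
  fun S hS ↦ (hX S hS).comp (fun i ↦ f i.val) (fun i ↦ hf i.val)

lemma CWiseIndep.integral_prod {Y : ι → Ω → ℝ} (hY : CWiseIndep c Y μ)
    (hmeas : ∀ i, Measurable (Y i)) {S : Finset ι} (hS : #S ≤ c) :
    ∫ ω, ∏ i ∈ S, Y i ω ∂μ = ∏ i ∈ S, ∫ ω, Y i ω ∂μ := by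
  have := (hY S hS).integral_fun_prod_eq_prod_integral fun i ↦ (hmeas i).aestronglyMeasurable
  convert this using 1
  · congr 1 with ω
    exact (prod_coe_sort S fun i ↦ Y i ω).symm
  · exact (prod_coe_sort S _).symm

end Independence

section Bounded

variable {Ω : Type*} [MeasurableSpace Ω] {μ : Measure Ω} [IsProbabilityMeasure μ]

lemma integrable_of_abs_le_one {Z : Ω → ℝ} (hZ : Measurable Z) (hb : ∀ ω, |Z ω| ≤ 1) :
    Integrable Z μ :=
  .of_bound hZ.aestronglyMeasurable 1 (ae_of_all _ hb)

lemma abs_integral_pow_le_integral_sq {Z : Ω → ℝ} (hZ : Measurable Z) (hb : ∀ ω, |Z ω| ≤ 1)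
    {m : ℕ} (hm : 2 ≤ m) : |∫ ω, Z ω ^ m ∂μ| ≤ ∫ ω, Z ω ^ 2 ∂μ :=
  calc |∫ ω, Z ω ^ m ∂μ| ≤ ∫ ω, |Z ω| ^ m ∂μ :=
        abs_integral_le_integral_abs.trans_eq (by simp only [abs_pow])
    _ ≤ ∫ ω, |Z ω| ^ 2 ∂μ := by
        refine integral_mono (integrable_of_abs_le_one (by fun_prop) fun ω ↦ ?_)
          (integrable_of_abs_le_one (by fun_prop) fun ω ↦ ?_)
          fun ω ↦ pow_le_pow_of_le_one (abs_nonneg _) (hb ω) hm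
        all_goals rw [abs_pow, abs_abs]; exact pow_le_one₀ (abs_nonneg _) (hb ω)
    _ = ∫ ω, Z ω ^ 2 ∂μ := by simp only [sq_abs]

end Bounded

lemma card_filter_piFinset_card_image_eq_le {ι : Type*} [DecidableEq ι] (T : Finset ι) (q s : ℕ) :
    #{g ∈ Fintype.piFinset fun _ : Fin q ↦ T | #(univ.image g) = s} ≤ (#T).choose s * s ^ q := by
  rw [← card_powersetCard, mul_comm]
  refine card_le_mul_card_image_of_maps_to (f := fun g ↦ univ.image g) (fun g hg ↦ ?_) _
    fun S hS ↦ ?_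
  · rw [mem_filter, Fintype.mem_piFinset] at hg
    exact mem_powersetCard.2 ⟨fun i hi ↦ by
      obtain ⟨j, -, rfl⟩ := mem_image.1 hi; exact hg.1 j, hg.2⟩
  · calc #{g ∈ {g ∈ Fintype.piFinset fun _ : Fin q ↦ T | #(univ.image g) = s} | univ.image g = S}
        ≤ #(Fintype.piFinset fun _ : Fin q ↦ S) := by
          refine card_le_card fun g hg ↦ Fintype.mem_piFinset.2 fun j ↦ ?_
          rw [← (mem_filter.1 hg).2]
          exact mem_image_of_mem g (mem_univ j)
      _ = s ^ q := by rw [Fintype.card_piFinset_const, (mem_powersetCard.1 hS).2]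

section Moments

variable {Ω ι : Type*} [MeasurableSpace Ω] {μ : Measure Ω} [IsProbabilityMeasure μ] {c : ℕ}
  {Y : ι → Ω → ℝ} {p : ℝ}

lemma CWiseIndep.integral_prod_comp_le [DecidableEq ι] (hind : CWiseIndep c Y μ)
    (hmeas : ∀ i, Measurable (Y i)) (hbdd : ∀ i ω, |Y i ω| ≤ 1)
    (hmean : ∀ i, ∫ ω, Y i ω ∂μ = 0) (hvar : ∀ i, ∫ ω, Y i ω ^ 2 ∂μ ≤ p)
    {q : ℕ} (hq : q ≤ c) (g : Fin q → ι) :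
    ∫ ω, ∏ j, Y (g j) ω ∂μ ≤ if 2 * #(univ.image g) ≤ q then p ^ #(univ.image g) else 0 := by
  set m : ι → ℕ := fun i ↦ #{j | g j = i}
  have hprod : ∫ ω, ∏ j, Y (g j) ω ∂μ = ∏ i ∈ univ.image g, ∫ ω, Y i ω ^ m i ∂μ := by
    have hfib : ∀ ω, ∏ j, Y (g j) ω = ∏ i ∈ univ.image g, Y i ω ^ m i :=
      fun ω ↦ prod_comp (fun i ↦ Y i ω) g
    simp_rw [hfib]
    exact (hind.comp (fun i y ↦ y ^ m i) fun i ↦ by fun_prop).integral_prod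
      (fun i ↦ (hmeas i).pow_const _) (card_image_le.trans (by simpa using hq))
  by_cases hsingle : ∃ i ∈ univ.image g, m i = 1
  · obtain ⟨i, hi, hmi⟩ := hsingle
    rw [hprod, prod_eq_zero hi (by simp [hmi, hmean])]
    have hp : 0 ≤ p := (integral_nonneg fun ω ↦ sq_nonneg _).trans (hvar i)
    split_ifs <;> positivity
  have hmult : ∀ i ∈ univ.image g, 2 ≤ m i := fun i hi ↦ by
    obtain ⟨j, -, rfl⟩ := mem_image.1 hi
    have : 0 < m (g j) := card_pos.2 ⟨j, by simp⟩
    grind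
  have hcard : 2 * #(univ.image g) ≤ q := by
    calc 2 * #(univ.image g) = ∑ _i ∈ univ.image g, 2 := by rw [sum_const, smul_eq_mul, mul_comm]
      _ ≤ ∑ i ∈ univ.image g, m i := sum_le_sum hmult
      _ = q := by rw [← card_eq_sum_card_image, card_univ, Fintype.card_fin]
  rw [if_pos hcard, hprod]
  calc ∏ i ∈ univ.image g, ∫ ω, Y i ω ^ m i ∂μ
      ≤ ∏ i ∈ univ.image g, |∫ ω, Y i ω ^ m i ∂μ| := (le_abs_self _).trans_eq (abs_prod _ _)
    _ ≤ ∏ _i ∈ univ.image g, p := prod_le_prod (fun _ _ ↦ abs_nonneg _) fun i hi ↦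
        (abs_integral_pow_le_integral_sq (hmeas i) (hbdd i) (hmult i hi)).trans (hvar i)
    _ = p ^ #(univ.image g) := prod_const p

theorem CWiseIndep.integral_sum_pow_le (hind : CWiseIndep c Y μ)
    (hmeas : ∀ i, Measurable (Y i)) (hbdd : ∀ i ω, |Y i ω| ≤ 1)
    (hmean : ∀ i, ∫ ω, Y i ω ∂μ = 0) (hp : 0 ≤ p) (hvar : ∀ i, ∫ ω, Y i ω ^ 2 ∂μ ≤ p)
    (T : Finset ι) {q : ℕ} (hq : q ≤ c) :
    ∫ ω, (∑ i ∈ T, Y i ω) ^ q ∂μ ≤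
      ∑ s ∈ range (q / 2 + 1), ((#T).choose s * s ^ q : ℕ) * p ^ s := by
  classical
  set F : ℕ → ℝ := fun s ↦ if 2 * s ≤ q then p ^ s else 0
  have hint : ∀ g : Fin q → ι, Integrable (fun ω ↦ ∏ j, Y (g j) ω) μ := fun g ↦
    integrable_of_abs_le_one (by fun_prop) fun ω ↦ by
      rw [abs_prod]; exact prod_le_one (fun _ _ ↦ abs_nonneg _) fun j _ ↦ hbdd _ ω
  calc ∫ ω, (∑ i ∈ T, Y i ω) ^ q ∂μ
      = ∑ g ∈ Fintype.piFinset (fun _ : Fin q ↦ T), ∫ ω, ∏ j, Y (g j) ω ∂μ := by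
        simp_rw [sum_pow']
        exact integral_finsetSum _ fun g _ ↦ hint g
    _ ≤ ∑ g ∈ Fintype.piFinset (fun _ : Fin q ↦ T), F #(univ.image g) :=
        sum_le_sum fun g _ ↦ hind.integral_prod_comp_le hmeas hbdd hmean hvar hq g
    _ = ∑ s ∈ range (q + 1),
          #{g ∈ Fintype.piFinset (fun _ : Fin q ↦ T) | #(univ.image g) = s} * F s := by
        rw [← sum_fiberwise_of_maps_to (g := fun g ↦ #(univ.image g)) (t := range (q + 1))]
        · refine sum_congr rfl fun s _ ↦ ?_
          rw [← nsmul_eq_mul, ← sum_const]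
          exact sum_congr rfl fun g hg ↦ by rw [(mem_filter.1 hg).2]
        · intro g _
          exact mem_range_succ_iff.2 (card_image_le.trans (by simp))
    _ ≤ ∑ s ∈ range (q + 1), ((#T).choose s * s ^ q : ℕ) * F s := by
        gcongr with s
        exact card_filter_piFinset_card_image_eq_le T q s
    _ = ∑ s ∈ range (q / 2 + 1), ((#T).choose s * s ^ q : ℕ) * p ^ s := by
        simp only [F, mul_ite, mul_zero]
        rw [← sum_filter]
        congr 1
        ext s
        simp only [mem_filter, mem_range]
        omega

end Moments

section Uniform

variable {Ω : Type*} [MeasurableSpace Ω] {μ : Measure Ω} [IsProbabilityMeasure μ] {K : ℕ}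
  {X : Ω → Fin K}

lemma integral_comp_of_uniform (hX : Measurable X)
    (hu : ∀ k, μ {ω | X ω = k} = (K : ENNReal)⁻¹) (f : Fin K → ℝ) :
    ∫ ω, f (X ω) ∂μ = (K : ℝ)⁻¹ * ∑ k, f k := by
  rw [← integral_map hX.aemeasurable Measurable.of_discrete.aestronglyMeasurable,
    integral_fintype .of_finite, mul_sum]
  refine sum_congr rfl fun k _ ↦ ?_
  rw [map_measureReal_apply hX (measurableSet_singleton k), smul_eq_mul, measureReal_def]
  simp [Set.preimage, hu]

lemma integral_indicator_sub_inv (hK : 0 < K) (hX : Measurable X)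
    (hu : ∀ k, μ {ω | X ω = k} = (K : ENNReal)⁻¹) (b : Fin K) :
    ∫ ω, ((if X ω = b then 1 else 0) - (K : ℝ)⁻¹) ∂μ = 0 := by
  rw [integral_comp_of_uniform hX hu fun a ↦ (if a = b then 1 else 0) - (K : ℝ)⁻¹]
  simp [sum_sub_distrib, hK.ne']

lemma integral_indicator_sub_inv_sq_le (hX : Measurable X)
    (hu : ∀ k, μ {ω | X ω = k} = (K : ENNReal)⁻¹) (b : Fin K) :
    ∫ ω, ((if X ω = b then 1 else 0) - (K : ℝ)⁻¹) ^ 2 ∂μ ≤ (K : ℝ)⁻¹ := by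
  rw [integral_comp_of_uniform hX hu fun a ↦ ((if a = b then 1 else 0) - (K : ℝ)⁻¹) ^ 2]
  have hsq : ∀ a : Fin K, ((if a = b then 1 else 0) - (K : ℝ)⁻¹) ^ 2 =
      (1 - 2 * (K : ℝ)⁻¹) * (if a = b then 1 else 0) + (K : ℝ)⁻¹ ^ 2 := fun a ↦ by
    split_ifs <;> ring
  simp only [hsq, sum_add_distrib, ← mul_sum, sum_ite_eq', mem_univ, if_true, sum_const,
    card_univ, Fintype.card_fin, nsmul_eq_mul]
  rcases K.eq_zero_or_pos with rfl | hK
  · simp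
  have hKx : (K : ℝ) * (K : ℝ)⁻¹ ^ 2 = (K : ℝ)⁻¹ := by field_simp
  rw [hKx]
  nlinarith [sq_nonneg (K : ℝ)⁻¹]

end Uniform

lemma measure_ge_le_ofReal_integral_pow_div {Ω : Type*} [MeasurableSpace Ω] {μ : Measure Ω}
    [IsFiniteMeasure μ] {Z : Ω → ℝ} {q : ℕ} (hq : Even q)
    (hZ : Integrable (fun ω ↦ Z ω ^ q) μ) {a : ℝ} (ha : 0 < a) :
    μ {ω | a ≤ Z ω} ≤ ENNReal.ofReal ((∫ ω, Z ω ^ q ∂μ) / a ^ q) :=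
  calc μ {ω | a ≤ Z ω} ≤ μ {ω | a ^ q ≤ Z ω ^ q} :=
        measure_mono fun ω hω ↦ pow_le_pow_left₀ ha.le hω q
    _ = ENNReal.ofReal (μ.real {ω | a ^ q ≤ Z ω ^ q}) := (ofReal_measureReal).symm
    _ ≤ _ := by
        refine ENNReal.ofReal_le_ofReal ((le_div_iff₀ (by positivity)).2 ?_)
        rw [mul_comm]
        exact mul_meas_ge_le_integral_of_nonneg (ae_of_all _ fun ω ↦ hq.pow_nonneg _) hZ _

lemma sum_choose_mul_pow_le {N h q : ℕ} {x y : ℝ} (hx : 0 ≤ x) (hxy : N * x ≤ y) (hy : 1 ≤ y) :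
    ∑ s ∈ range (h + 1), ((N.choose s * s ^ q : ℕ) : ℝ) * x ^ s ≤ (h + 1) * h ^ q * y ^ h := by
  calc ∑ s ∈ range (h + 1), ((N.choose s * s ^ q : ℕ) : ℝ) * x ^ s
      ≤ ∑ _s ∈ range (h + 1), (h : ℝ) ^ q * y ^ h := sum_le_sum fun s hs ↦ by
        have hsh : s ≤ h := mem_range_succ_iff.1 hs
        calc ((N.choose s * s ^ q : ℕ) : ℝ) * x ^ s = (s : ℝ) ^ q * (N.choose s * x ^ s) := by
              push_cast; ring
          _ ≤ (h : ℝ) ^ q * (N * x) ^ s := by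
              rw [mul_pow]
              gcongr
              exact_mod_cast N.choose_le_pow s
          _ ≤ (h : ℝ) ^ q * y ^ h := by
              gcongr
              exact (pow_le_pow_left₀ (by positivity) hxy s).trans (pow_le_pow_right₀ hy hsh)
    _ = (h + 1) * h ^ q * y ^ h := by simp [mul_assoc]

lemma mul_sum_choose_div_le_rpow {n δ B K c : ℝ} {N h : ℕ} (hn : 0 ≤ n) (hK : 0 < K)
    (hKn : K ≤ n) (hN : N / K ≤ B / 2) (hC : (h + 1) * h ^ (2 * h) * 16 ^ h ≤ n ^ δ)
    (hB : n ^ δ / 2 ≤ B) (hh : 1 ≤ h) (hc : c / 3 + 1 ≤ h) :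
    K * ((∑ s ∈ range (h + 1), ((N.choose s * s ^ (2 * h) : ℕ) : ℝ) * K⁻¹ ^ s) /
      (B / 4) ^ (2 * h)) ≤ n ^ (1 - δ * c / 3) := by
  set x := n ^ δ
  set A : ℝ := (h + 1) * h ^ (2 * h)
  have hA : 1 ≤ A := one_le_mul_of_one_le_of_one_le (by linarith)
    (one_le_pow₀ (by exact_mod_cast hh))
  have h16 : (16 : ℝ) ≤ x := by
    refine le_trans ?_ hC
    calc (16 : ℝ) ≤ 16 ^ h := le_self_pow₀ (by norm_num) (by omega)
      _ ≤ A * 16 ^ h := le_mul_of_one_le_left (by positivity) hA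
  have hn0 : 0 < n := by
    refine hn.lt_of_ne fun h0 ↦ ?_
    have hx : x ≤ 1 := by simp only [x, ← h0]; exact Real.zero_rpow_le_one δ
    linarith
  have hB0 : 0 < B := by linarith
  have h8B : 8 / B ≤ 16 / x := by
    rw [div_le_div_iff₀ hB0 (by linarith)]
    linarith
  have hexp : x ^ (c / 3) ≤ x ^ (h - 1) := by
    rw [← Real.rpow_natCast]
    refine Real.rpow_le_rpow_of_exponent_le (by linarith) ?_
    rw [Nat.cast_sub hh]
    push_cast
    linarith
  calc K * ((∑ s ∈ range (h + 1), ((N.choose s * s ^ (2 * h) : ℕ) : ℝ) * K⁻¹ ^ s) /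
        (B / 4) ^ (2 * h))
      ≤ K * (A * (B / 2) ^ h / (B / 4) ^ (2 * h)) := by
        gcongr
        exact sum_choose_mul_pow_le (by positivity) (by rwa [← div_eq_mul_inv]) (by linarith)
    _ = K * A * (8 / B) ^ h := by
        have h8 : (B / 2) ^ h / (B / 4) ^ (2 * h) = (8 / B) ^ h := by
          rw [pow_mul, ← div_pow]
          congr 1
          field_simp
          norm_num
        rw [mul_div_assoc, h8]
        ring
    _ ≤ n * A * (8 / B) ^ h := by gcongr
    _ ≤ n * A * (16 / x) ^ h := by gcongr
    _ = n * (A * 16 ^ h) / (x * x ^ (h - 1)) := by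
        rw [← pow_succ', Nat.sub_add_cancel hh, div_pow]
        ring
    _ ≤ n * x / (x * x ^ (h - 1)) := by gcongr
    _ = n / x ^ (h - 1) := by field_simp
    _ ≤ n / x ^ (c / 3) := by gcongr
    _ = n ^ (1 - δ * c / 3) := by
        rw [Real.rpow_sub hn0, Real.rpow_one, mul_div_assoc, Real.rpow_mul hn]

lemma CWiseIndep.measure_lt_card_filter_le {Ω ι : Type*} [MeasurableSpace Ω] {μ : Measure Ω}
    [IsProbabilityMeasure μ] {K c q : ℕ} (hK : 0 < K) {r : ι → Ω → Fin K}
    (hr : ∀ i, Measurable (r i)) (hu : ∀ i k, μ {ω | r i ω = k} = (K : ENNReal)⁻¹)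
    (hind : CWiseIndep c r μ) (hq : Even q) (hqc : q ≤ c) (T : Finset ι) (b : ι → Fin K)
    {a θ : ℝ} (ha : 0 < a) (hθ : #T / K + a ≤ θ) :
    μ {ω | θ < #{i ∈ T | r i ω = b i}} ≤
      ENNReal.ofReal ((∑ s ∈ range (q / 2 + 1),
        ((#T).choose s * s ^ q : ℕ) * (K : ℝ)⁻¹ ^ s) / a ^ q) := by
  set f : ι → Fin K → ℝ := fun i x ↦ (if x = b i then 1 else 0) - (K : ℝ)⁻¹
  have hf : ∀ i x, |f i x| ≤ 1 := fun i x ↦ by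
    have : (K : ℝ)⁻¹ ≤ 1 := inv_le_one_of_one_le₀ (by exact_mod_cast hK)
    simp only [f]
    have : 0 ≤ (K : ℝ)⁻¹ := by positivity
    split_ifs <;> rw [abs_le] <;> constructor <;> linarith
  have hmeas : ∀ i, Measurable fun ω ↦ f i (r i ω) :=
    fun i ↦ (Measurable.of_discrete (f := f i)).comp (hr i)
  have hcard : ∀ ω, (#{i ∈ T | r i ω = b i} : ℝ) = ∑ i ∈ T, f i (r i ω) + #T / K := by
    intro ω
    simp only [f, sum_sub_distrib, sum_boole, sum_const, nsmul_eq_mul]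
    ring
  have hmoment := (hind.comp f fun i ↦ .of_discrete).integral_sum_pow_le hmeas
    (fun i ω ↦ hf i (r i ω)) (fun i ↦ integral_indicator_sub_inv hK (hr i) (hu i) (b i))
    (by positivity) (fun i ↦ integral_indicator_sub_inv_sq_le (hr i) (hu i) (b i)) T hqc
  have hint : Integrable (fun ω ↦ (∑ i ∈ T, f i (r i ω)) ^ q) μ := by
    refine .of_bound ((measurable_sum T fun i _ ↦ hmeas i).pow_const q).aestronglyMeasurable
      (#T ^ q) (ae_of_all _ fun ω ↦ ?_)
    rw [Real.norm_eq_abs, abs_pow]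
    refine pow_le_pow_left₀ (abs_nonneg _) ((abs_sum_le_sum_abs _ _).trans ?_) q
    simpa using sum_le_sum fun i (_ : i ∈ T) ↦ hf i (r i ω)
  calc μ {ω | θ < #{i ∈ T | r i ω = b i}}
      ≤ μ {ω | a ≤ ∑ i ∈ T, f i (r i ω)} := measure_mono fun ω hω ↦ by
        simp only [Set.mem_ofPred_eq, hcard] at hω ⊢
        linarith
    _ ≤ _ := (measure_ge_le_ofReal_integral_pow_div hq hint ha).trans
        (ENNReal.ofReal_le_ofReal (div_le_div_of_nonneg_right hmoment (by positivity)))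

lemma finXor_eq_iff {t : ℕ} {w a k : Fin (2 ^ t)} : finXor w a = k ↔ a = finXor w k := by
  constructor <;> rintro rfl <;> ext <;> simp [finXor]

open scoped Classical in
lemma card_filter_finXor_eq {M t : ℕ} (v : Fin M → Option (Fin (2 ^ t))) (x : Fin M → Fin (2 ^ t))
    (k : Fin (2 ^ t)) : #{i | ∃ w, v i = some w ∧ finXor w (x i) = k} =
      #{i ∈ {i | (v i).isSome} | x i = finXor ((v i).getD k) k} := by
  congr 1
  ext i
  rcases hvi : v i with _ | w <;> simp [hvi, finXor_eq_iff]

open scoped Classical in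
/-- Claim 4.3: for every `δ ∈ (0, 0.1)` and every sufficiently large `c`
(depending only on `δ`), for all sufficiently large `n`: with `K = 2^t ≤ n`,
`n^δ/2 ≤ B ≤ 2 n^δ`, `M ≤ K·B/2`, any words `v : Fin M → Option (Fin K)`, and `c`-wise
independent uniform shifts `r_i` on `Fin K`, letting
`X_k = #{i : v_i = some w ∧ w ⊕ r_i = k}`, we have
`Pr[∃ k, X_k > 3B/4] ≤ n^{1 - δc/3}`. -/
theorem stmt_7 :
    ∀ δ : ℝ, 0 < δ → δ < 0.1 →
      ∃ c₀ : ℕ, ∀ c : ℕ, c₀ ≤ c →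
        ∃ N₀ : ℕ, ∀ n : ℕ, N₀ ≤ n →
          ∀ B M t : ℕ, 0 < B → 0 < M → 0 < t →
            (2 ^ t : ℕ) ≤ n →
            (n : ℝ) ^ δ / 2 ≤ (B : ℝ) → (B : ℝ) ≤ 2 * (n : ℝ) ^ δ →
            (M : ℝ) ≤ ((2 ^ t : ℕ) : ℝ) * (B : ℝ) / 2 →
            ∀ v : Fin M → Option (Fin (2 ^ t)),
            ∀ (Ω : Type) (_ : MeasurableSpace Ω) (μ : Measure Ω),
              IsProbabilityMeasure μ →
            ∀ r : Fin M → Ω → Fin (2 ^ t),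
              (∀ i, Measurable (r i)) →
              (∀ i k, μ {ω | r i ω = k} = ((2 ^ t : ℕ) : ENNReal)⁻¹) →
              CWiseIndep c r μ →
              μ {ω | ∃ k : Fin (2 ^ t), 3 * (B : ℝ) / 4 <
                  ((Finset.univ.filter fun i : Fin M =>
                      ∃ w, v i = some w ∧ finXor w (r i ω) = k).card : ℝ)} ≤
                ENNReal.ofReal ((n : ℝ) ^ (1 - δ * c / 3)) := by
  intro δ hδ _
  refine ⟨12, fun c hc ↦ ?_⟩
  obtain ⟨h, hh⟩ : ∃ h, h = c / 3 + 2 := ⟨_, rfl⟩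
  obtain ⟨N₀, hN₀⟩ := Filter.eventually_atTop.1 <|
    ((tendsto_rpow_atTop hδ).comp tendsto_natCast_atTop_atTop).eventually_ge_atTop
      (((h : ℝ) + 1) * h ^ (2 * h) * 16 ^ h)
  refine ⟨N₀, fun n hn B M t _ _ _ hKn hBl _ hMu v Ω _ μ _ r hr hu hind ↦ ?_⟩
  set T : Finset (Fin M) := {i | (v i).isSome}
  have hK : (0 : ℝ) < (2 ^ t : ℕ) := by positivity
  have hT : (#T : ℝ) / (2 ^ t : ℕ) ≤ B / 2 := by
    rw [div_le_iff₀ hK]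
    have : (#T : ℝ) ≤ M := by exact_mod_cast (card_le_univ T).trans_eq (Fintype.card_fin M)
    linarith
  have hc3 : (c : ℝ) / 3 + 1 ≤ h := by
    have : (c : ℝ) ≤ 3 * (c / 3 : ℕ) + 3 := by exact_mod_cast (by omega : c ≤ 3 * (c / 3) + 3)
    rw [hh]; push_cast; linarith
  calc μ {ω | ∃ k : Fin (2 ^ t), 3 * (B : ℝ) / 4 <
        #{i | ∃ w, v i = some w ∧ finXor w (r i ω) = k}}
      ≤ ∑ k : Fin (2 ^ t), μ {ω | 3 * (B : ℝ) / 4 <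
          #{i | ∃ w, v i = some w ∧ finXor w (r i ω) = k}} := by
        rw [Set.ofPred_exists]
        exact measure_iUnion_fintype_le _ _
    _ ≤ ∑ _k : Fin (2 ^ t), ENNReal.ofReal ((∑ s ∈ range (h + 1),
          ((#T).choose s * s ^ (2 * h) : ℕ) * ((2 ^ t : ℕ) : ℝ)⁻¹ ^ s) / (B / 4) ^ (2 * h)) :=
        sum_le_sum fun k _ ↦ by
          simp_rw [card_filter_finXor_eq v]
          simpa using hind.measure_lt_card_filter_le (by positivity) hr hu (even_two_mul h)
            (by omega) T _ (a := B / 4) (by positivity) (by linarith)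
    _ ≤ ENNReal.ofReal ((n : ℝ) ^ (1 - δ * c / 3)) := by
        rw [sum_const, card_univ, Fintype.card_fin, nsmul_eq_mul, ← ENNReal.ofReal_natCast,
          ← ENNReal.ofReal_mul (by positivity)]
        exact ENNReal.ofReal_le_ofReal <| mul_sum_choose_div_le_rpow (by positivity) hK
          (by exact_mod_cast hKn) hT (hN₀ n hn) hBl (by omega) hc3
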